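/- arXiv:1704.05442 — 7 statements merged into one kernel-verified Lean document; each statement's English description precedes it below -/
import Mathlib

section
/- Let n ≥ 4 and l ∈ ℕ with 0 < l < n/2 and l ≠ n/3. Then the imaginary part of λ_l at F = F_H(l,n), namely ω_0(l,n) = -g(l,n)/f(l,n), equals cos(πl/n)/sin(πl/n), and ω_0(l,n) ≠ 0. -/
open Real

/-- `f(l,n) = cos(2πl/n) - cos(4πl/n)`. -/
noncomputable def lorenz96f (l n : ℕ) : ℝ :=
  Real.cos (2 * Real.pi * l / n) - Real.cos (4 * Real.pi * l / n)

/-- `g(l,n) = -sin(2πl/n) - sin(4πl/n)`. -/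
noncomputable def lorenz96g (l n : ℕ) : ℝ :=
  -Real.sin (2 * Real.pi * l / n) - Real.sin (4 * Real.pi * l / n)

/-- For `n ≥ 4` and `0 < l < n/2`, `l ≠ n/3`, the imaginary part of `λ_l` at the
Hopf bifurcation value, `ω_0(l,n) = -g(l,n)/f(l,n)`, equals `cos(πl/n)/sin(πl/n)`
and is nonzero. -/
theorem lorenz96_omega_zero (n : ℕ) (hn : 4 ≤ n) (l : ℕ)
    (hl0 : 0 < l) (hl2 : (l : ℝ) < n / 2) (hl3 : (l : ℝ) ≠ n / 3) :
    -lorenz96g l n / lorenz96f l n = Real.cos (Real.pi * l / n) / Real.sin (Real.pi * l / n) ∧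
    -lorenz96g l n / lorenz96f l n ≠ 0 := by
  have hn0 : (0 : ℝ) < n := by positivity
  set θ : ℝ := Real.pi * l / n with hθdef
  have hl0' : (0 : ℝ) < l := by exact_mod_cast hl0
  have hθ0 : 0 < θ := by positivity
  have hθlt : θ < Real.pi / 2 := by
    rw [hθdef, div_lt_iff₀ hn0]
    have := Real.pi_pos
    nlinarith [hl2]
  have hsθ : 0 < Real.sin θ := Real.sin_pos_of_pos_of_lt_pi hθ0 (by linarith [Real.pi_pos])
  have hcθ : 0 < Real.cos θ := Real.cos_pos_of_mem_Ioo ⟨by linarith, hθlt⟩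
  have h3ne : Real.sin (3 * θ) ≠ 0 := by
    have h3pos : 0 < 3 * θ := by linarith
    have h3lt : 3 * θ < 3 * Real.pi / 2 := by linarith
    rcases lt_trichotomy (3 * θ) Real.pi with h | h | h
    · exact ne_of_gt (Real.sin_pos_of_pos_of_lt_pi h3pos h)
    · exfalso
      apply hl3
      have : 3 * (Real.pi * l / n) = Real.pi := h
      have hpi := Real.pi_ne_zero
      field_simp at this ⊢
      nlinarith [this, Real.pi_pos]
    · have : Real.sin (3 * θ) = -Real.sin (3 * θ - Real.pi) := by
        rw [Real.sin_sub_pi, neg_neg]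
      rw [this]
      have hpos : 0 < Real.sin (3 * θ - Real.pi) :=
        Real.sin_pos_of_pos_of_lt_pi (by linarith) (by linarith [Real.pi_pos])
      exact neg_ne_zero.mpr (ne_of_gt hpos)
  have h2 : 2 * Real.pi * l / n = 2 * θ := by rw [hθdef]; ring
  have h4 : 4 * Real.pi * l / n = 4 * θ := by rw [hθdef]; ring
  have hg : -lorenz96g l n = 2 * Real.sin (3 * θ) * Real.cos θ := by
    unfold lorenz96g
    rw [h2, h4, show 2 * θ = 3 * θ - θ by ring, show 4 * θ = 3 * θ + θ by ring,
      Real.sin_sub, Real.sin_add]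
    ring
  have hf : lorenz96f l n = 2 * Real.sin (3 * θ) * Real.sin θ := by
    unfold lorenz96f
    rw [h2, h4, show 2 * θ = 3 * θ - θ by ring, show 4 * θ = 3 * θ + θ by ring,
      Real.cos_sub, Real.cos_add]
    ring
  have heq : -lorenz96g l n / lorenz96f l n = Real.cos θ / Real.sin θ := by
    rw [hg, hf]
    have h2ne : (2 : ℝ) * Real.sin (3 * θ) ≠ 0 := by
      simpa using h3ne
    exact mul_div_mul_left _ _ h2ne
  refine ⟨heq, ?_⟩
  rw [heq]
  exact div_ne_zero (ne_of_gt hcθ) (ne_of_gt hsθ)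
end

section
/- For every m ∈ ℕ with m ≥ 1: (a) with n = 10m, l_1 = m, l_2 = 3m one has cos(2πl_1/n) + cos(2πl_2/n) = 1/2 and f(l_1,n) = f(l_2,n) = 1/2, so F_HH = 2; (b) with n = 12m, l_1 = 2m, l_2 = 3m one has cos(2πl_1/n) + cos(2πl_2/n) = 1/2 and f(l_1,n) = f(l_2,n) = 1, so F_HH = 1. -/
open Real

lemma cos_two_pi_div_five' : Real.cos (2 * Real.pi / 5) = (Real.sqrt 5 - 1) / 4 := by
  have h := Real.cos_two_mul (Real.pi / 5)
  rw [show 2 * (Real.pi / 5) = 2 * Real.pi / 5 by ring, Real.cos_pi_div_five] at h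
  have h5 : Real.sqrt 5 ^ 2 = 5 := Real.sq_sqrt (by norm_num)
  nlinarith [h, h5]

lemma cos_three_pi_div_five' : Real.cos (3 * Real.pi / 5) = (1 - Real.sqrt 5) / 4 := by
  have : (3 : ℝ) * Real.pi / 5 = Real.pi - 2 * Real.pi / 5 := by ring
  rw [this, Real.cos_pi_sub, cos_two_pi_div_five']
  ring

lemma cos_six_pi_div_five' : Real.cos (6 * Real.pi / 5) = -((1 + Real.sqrt 5) / 4) := by
  have : (6 : ℝ) * Real.pi / 5 = Real.pi + Real.pi / 5 := by ring
  rw [this]; simp [Real.cos_add, Real.cos_pi_div_five]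

/-- Explicit Hopf-Hopf bifurcations: for every `m ≥ 1`,
(a) with `n = 10m`, `l₁ = m`, `l₂ = 3m` one has
`cos(2πl₁/n) + cos(2πl₂/n) = 1/2`, `f(l₁,n) = f(l₂,n) = 1/2`, so `F_HH = 2`;
(b) with `n = 12m`, `l₁ = 2m`, `l₂ = 3m` one has
`cos(2πl₁/n) + cos(2πl₂/n) = 1/2`, `f(l₁,n) = f(l₂,n) = 1`, so `F_HH = 1`. -/
theorem lorenz96_hopf_hopf_families (m : ℕ) (hm : 1 ≤ m) :
    (Real.cos (2 * Real.pi * m / (10 * m)) + Real.cos (2 * Real.pi * (3 * m) / (10 * m)) = 1 / 2 ∧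
      lorenz96f m (10 * m) = 1 / 2 ∧ lorenz96f (3 * m) (10 * m) = 1 / 2 ∧
      1 / lorenz96f m (10 * m) = 2) ∧
    (Real.cos (2 * Real.pi * (2 * m) / (12 * m)) + Real.cos (2 * Real.pi * (3 * m) / (12 * m)) = 1 / 2 ∧
      lorenz96f (2 * m) (12 * m) = 1 ∧ lorenz96f (3 * m) (12 * m) = 1 ∧
      1 / lorenz96f (2 * m) (12 * m) = 1) := by
  have hm0 : (m : ℝ) ≠ 0 := Nat.cast_ne_zero.mpr (by omega)
  unfold lorenz96f
  push_cast
  have e1 : 2 * Real.pi * m / (10 * m) = Real.pi / 5 := by field_simp; ring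
  have e2 : 2 * Real.pi * (3 * m) / (10 * m) = 3 * Real.pi / 5 := by field_simp; ring
  have e3 : 4 * Real.pi * m / (10 * m) = 2 * Real.pi / 5 := by field_simp; ring
  have e4 : 4 * Real.pi * (3 * m) / (10 * m) = 6 * Real.pi / 5 := by field_simp; ring
  have e5 : 2 * Real.pi * (2 * m) / (12 * m) = Real.pi / 3 := by field_simp; ring
  have e6 : 2 * Real.pi * (3 * m) / (12 * m) = Real.pi / 2 := by field_simp; ring
  have e7 : 4 * Real.pi * (2 * m) / (12 * m) = 2 * Real.pi / 3 := by field_simp; ring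
  have e8 : 4 * Real.pi * (3 * m) / (12 * m) = Real.pi := by field_simp; ring
  rw [e1, e2, e3, e4, e5, e6, e7, e8, Real.cos_pi_div_five, cos_two_pi_div_five',
    cos_three_pi_div_five', cos_six_pi_div_five', Real.cos_pi_div_three, Real.cos_pi_div_two,
    Real.cos_pi]
  have h7 : Real.cos (2 * Real.pi / 3) = -(1/2) := by
    rw [show (2:ℝ) * Real.pi / 3 = Real.pi - Real.pi / 3 by ring, Real.cos_pi_sub,
      Real.cos_pi_div_three]
  rw [h7]
  have key : (1 + Real.sqrt 5) / 4 - (Real.sqrt 5 - 1) / 4 = 1 / 2 := by ring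
  refine ⟨⟨by ring, by ring, by ring, by rw [key]; norm_num⟩, by norm_num, by norm_num,
    by norm_num, by norm_num⟩
end

section
/- Let n ≥ 8 with n ≡ 0 (mod 3) and set l' = n/3 - 1. Then f(1,n) - f(l',n) = 2√3 · sin(3π/n) · sin(π/n - π/6), and this quantity is strictly negative for all such n ≥ 9. -/
open Real

lemma lorenz96_key (a : ℝ) :
    Real.cos (2*a) - Real.cos (4*a)
      - (Real.cos (2*Real.pi/3 - 2*a) - Real.cos (4*Real.pi/3 - 4*a))
    = 2 * Real.sqrt 3 * Real.sin (3*a) * Real.sin (a - Real.pi/6) := by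
  have h23c : Real.cos (2*Real.pi/3) = -(1/2) := by
    rw [show (2*Real.pi/3 : ℝ) = Real.pi - Real.pi/3 by ring, Real.cos_pi_sub,
      Real.cos_pi_div_three]
  have h23s : Real.sin (2*Real.pi/3) = Real.sqrt 3 / 2 := by
    rw [show (2*Real.pi/3 : ℝ) = Real.pi - Real.pi/3 by ring, Real.sin_pi_sub,
      Real.sin_pi_div_three]
  have h43c : Real.cos (4*Real.pi/3) = -(1/2) := by
    rw [show (4*Real.pi/3 : ℝ) = Real.pi + Real.pi/3 by ring, Real.cos_add, Real.cos_pi,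
      Real.sin_pi, Real.cos_pi_div_three]
    ring
  have h43s : Real.sin (4*Real.pi/3) = -(Real.sqrt 3 / 2) := by
    rw [show (4*Real.pi/3 : ℝ) = Real.pi + Real.pi/3 by ring, Real.sin_add, Real.cos_pi,
      Real.sin_pi, Real.sin_pi_div_three]
    ring
  rw [Real.cos_sub, Real.cos_sub, h23c, h23s, h43c, h43s, Real.sin_sub,
    Real.sin_pi_div_six, Real.cos_pi_div_six]
  have hcc : Real.cos (2*a) - Real.cos (4*a) = 2 * Real.sin (3*a) * Real.sin a := by
    rw [show (2*a : ℝ) = 3*a - a by ring, show (4*a : ℝ) = 3*a + a by ring,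
      Real.cos_sub, Real.cos_add]
    ring
  have hss : Real.sin (4*a) + Real.sin (2*a) = 2 * Real.sin (3*a) * Real.cos a := by
    rw [show (2*a : ℝ) = 3*a - a by ring, show (4*a : ℝ) = 3*a + a by ring,
      Real.sin_sub, Real.sin_add]
    ring
  have hs : Real.sqrt 3 * Real.sqrt 3 = 3 := Real.mul_self_sqrt (by norm_num)
  linear_combination (3/2)*hcc - (Real.sqrt 3/2)*hss - (Real.sin (3*a) * Real.sin a)*hs

/-- For `n ≥ 8` with `n ≡ 0 (mod 3)` and `l' = n/3 - 1`:
`f(1,n) - f(l',n) = 2√3 · sin(3π/n) · sin(π/n - π/6)`, which is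
strictly negative for all such `n ≥ 9`. -/
theorem lorenz96_f_difference_mod_zero (n : ℕ) (hn : 8 ≤ n) (hmod : 3 ∣ n) :
    lorenz96f 1 n - lorenz96f (n / 3 - 1) n
      = 2 * Real.sqrt 3 * Real.sin (3 * Real.pi / n) * Real.sin (Real.pi / n - Real.pi / 6) ∧
    lorenz96f 1 n - lorenz96f (n / 3 - 1) n < 0 := by
  obtain ⟨m, rfl⟩ := hmod
  have hm : 3 ≤ m := by omega
  have hm0 : (m : ℝ) ≠ 0 := Nat.cast_ne_zero.mpr (by omega)
  have hn3 : ((3 * m : ℕ) : ℝ) = 3 * (m : ℝ) := by push_cast; ring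
  have hdiv : 3 * m / 3 - 1 = m - 1 := by omega
  have hcast : ((m - 1 : ℕ) : ℝ) = (m : ℝ) - 1 := by
    have : 1 ≤ m := by omega
    push_cast [this]; ring
  set a : ℝ := Real.pi / (3 * (m : ℝ)) with ha
  have h1 : lorenz96f 1 (3 * m) = Real.cos (2*a) - Real.cos (4*a) := by
    unfold lorenz96f
    rw [hn3]
    congr 1 <;> (congr 1; rw [ha]; push_cast; field_simp; try ring)
  have h2 : lorenz96f (3 * m / 3 - 1) (3 * m)
      = Real.cos (2*Real.pi/3 - 2*a) - Real.cos (4*Real.pi/3 - 4*a) := by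
    unfold lorenz96f
    rw [hdiv, hn3, hcast]
    congr 1 <;> (congr 1; rw [ha]; field_simp; try ring)
  have h3 : 3 * Real.pi / ((3 * m : ℕ) : ℝ) = 3 * a := by
    rw [hn3, ha]; field_simp
  have h4 : Real.pi / ((3 * m : ℕ) : ℝ) = a := by rw [hn3, ha]
  have heq : lorenz96f 1 (3 * m) - lorenz96f (3 * m / 3 - 1) (3 * m)
      = 2 * Real.sqrt 3 * Real.sin (3 * Real.pi / ((3*m : ℕ) : ℝ))
        * Real.sin (Real.pi / ((3*m : ℕ) : ℝ) - Real.pi / 6) := by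
    rw [h1, h2, h3, h4]
    exact lorenz96_key a
  refine ⟨heq, ?_⟩
  rw [heq, h3, h4]
  have hpi := Real.pi_pos
  have hmR : (3 : ℝ) ≤ (m : ℝ) := by exact_mod_cast hm
  have ha_pos : 0 < a := by rw [ha]; positivity
  have ha_lt : a < Real.pi / 6 := by
    rw [ha]
    rw [div_lt_div_iff₀ (by linarith) (by norm_num)]
    nlinarith
  have h3a_pos : 0 < Real.sin (3 * a) := by
    apply Real.sin_pos_of_pos_of_lt_pi (by linarith)
    nlinarith
  have hneg : Real.sin (a - Real.pi / 6) < 0 := by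
    apply Real.sin_neg_of_neg_of_neg_pi_lt (by linarith)
    nlinarith
  have hs3 : 0 < Real.sqrt 3 := Real.sqrt_pos.mpr (by norm_num)
  nlinarith [mul_pos (mul_pos (by linarith : (0:ℝ) < 2 * Real.sqrt 3) h3a_pos) (neg_pos.mpr hneg)]
end

section
/- Let n ≥ 10 with n ≡ 1 (mod 3) and set l' = (n-1)/3. Then f(1,n) - f(l',n) = 4 sin(π/n) cos((8+n)π/(6n)) sin((10-n)π/(6n)); this is zero when n = 10 and strictly negative when n > 10. -/
/-!
With `θ = πl/n`, sum-to-product gives `f(l,n) = 2 sin 3θ sin θ`. For `n = 3k + 1` and `x = π/n`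
the angle of `f(k,n)` is `θ = π/3 - x/3`, so `sin 3θ = sin (π - x) = sin x` and
`f(1,n) - f(k,n) = 2 sin x (sin 3x - sin (π/3 - x/3))`; a second sum-to-product yields the
factorisation. For `n > 10` we have `0 < x < π/10`, where the three factors have signs `+, +, -`.
-/

open Real

lemma lorenz96f_eq_two_mul_sin_mul_sin (l n : ℕ) :
    lorenz96f l n = 2 * sin (3 * (π * l / n)) * sin (π * l / n) := by
  rw [lorenz96f, cos_sub_cos, show (2 * π * l / n - 4 * π * l / n) / 2 = -(π * l / n) by ring,
    sin_neg]
  ring_nf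

lemma lorenz96f_one_sub_lorenz96f_of_eq_three_mul_add_one {n k : ℕ} (h : n = 3 * k + 1) :
    lorenz96f 1 n - lorenz96f k n
      = 4 * sin (π / n) * cos (4 * (π / n) / 3 + π / 6) * sin (5 * (π / n) / 3 - π / 6) := by
  set x := π / n with hx
  have hn : (n : ℝ) ≠ 0 := by rw [h]; positivity
  have hkx : π * k / n = π / 3 - x / 3 := by
    have hk : (k : ℝ) = (n - 1) / 3 := by rw [h]; push_cast; ring
    rw [hx, hk]
    field_simp
  have hsin3 : sin (3 * (π / 3 - x / 3)) = sin x := by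
    rw [show 3 * (π / 3 - x / 3) = π - x by ring, sin_pi_sub]
  rw [lorenz96f_eq_two_mul_sin_mul_sin, lorenz96f_eq_two_mul_sin_mul_sin, hkx, hsin3,
    Nat.cast_one, mul_one, ← hx]
  calc 2 * sin (3 * x) * sin x - 2 * sin x * sin (π / 3 - x / 3)
      = 2 * sin x * (sin (3 * x) - sin (π / 3 - x / 3)) := by ring
    _ = 4 * sin x * cos (4 * x / 3 + π / 6) * sin (5 * x / 3 - π / 6) := by
      rw [sin_sub_sin]
      ring_nf

lemma four_mul_sin_mul_cos_mul_sin_neg {x : ℝ} (h0 : 0 < x) (h : x < π / 10) :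
    4 * sin x * cos (4 * x / 3 + π / 6) * sin (5 * x / 3 - π / 6) < 0 := by
  have hsin : 0 < sin x := sin_pos_of_pos_of_lt_pi h0 (by linarith [pi_pos])
  have hcos : 0 < cos (4 * x / 3 + π / 6) := cos_pos_of_mem_Ioo ⟨by linarith, by linarith⟩
  have hsin' : sin (5 * x / 3 - π / 6) < 0 :=
    sin_neg_of_neg_of_neg_pi_lt (by linarith) (by linarith [pi_pos])
  exact mul_neg_of_pos_of_neg (by positivity) hsin'

theorem lorenz96_f_difference_mod_one_general (n : ℕ) (hmod : n % 3 = 1) :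
    lorenz96f 1 n - lorenz96f ((n - 1) / 3) n
      = 4 * Real.sin (Real.pi / n) * Real.cos ((8 + n) * Real.pi / (6 * n))
          * Real.sin ((10 - (n : ℝ)) * Real.pi / (6 * n)) ∧
    (n = 10 → lorenz96f 1 n - lorenz96f ((n - 1) / 3) n = 0) ∧
    (10 < n → lorenz96f 1 n - lorenz96f ((n - 1) / 3) n < 0) := by
  have hn : (n : ℝ) ≠ 0 := by exact_mod_cast (by omega : n ≠ 0)
  have hcos : (8 + n) * π / (6 * n) = 4 * (π / n) / 3 + π / 6 := by field_simp; ring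
  have hsin : (10 - (n : ℝ)) * π / (6 * n) = 5 * (π / n) / 3 - π / 6 := by field_simp; ring
  rw [hcos, hsin, lorenz96f_one_sub_lorenz96f_of_eq_three_mul_add_one (by omega)]
  refine ⟨rfl, fun h10 => ?_, fun hlt => four_mul_sin_mul_cos_mul_sin_neg (by positivity) ?_⟩
  · subst h10
    rw [show 5 * (π / ((10 : ℕ) : ℝ)) / 3 - π / 6 = 0 by push_cast; ring, sin_zero, mul_zero]
  · exact div_lt_div_of_pos_left pi_pos (by norm_num) (by exact_mod_cast hlt)

/-- For `n ≥ 10` with `n ≡ 1 (mod 3)` and `l' = (n-1)/3`: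
`f(1,n) - f(l',n) = 4 sin(π/n) cos((8+n)π/(6n)) sin((10-n)π/(6n))`;
this is zero when `n = 10` and strictly negative when `n > 10`. -/
theorem lorenz96_f_difference_mod_one (n : ℕ) (hn : 10 ≤ n) (hmod : n % 3 = 1) :
    lorenz96f 1 n - lorenz96f ((n - 1) / 3) n
      = 4 * Real.sin (Real.pi / n) * Real.cos ((8 + n) * Real.pi / (6 * n))
          * Real.sin ((10 - (n : ℝ)) * Real.pi / (6 * n)) ∧
    (n = 10 → lorenz96f 1 n - lorenz96f ((n - 1) / 3) n = 0) ∧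
    (10 < n → lorenz96f 1 n - lorenz96f ((n - 1) / 3) n < 0) :=
  lorenz96_f_difference_mod_one_general n hmod
end

section
/- Let n ≥ 8 with n ≡ 2 (mod 3) and set l' = (n-2)/3. Then f(1,n) - f(l',n) = 2 sin(π/n)·(sin(3π/n) - 2 cos(π/n) sin((π/3)(1 - 2/n))), and this quantity is strictly negative for all such n ≥ 8. -/
open Real

lemma lorenz96_sqrt2_cos_pi_div_eight_gt_one : 1 < 2 * Real.cos (π/8) * Real.sin (π/4) := by
  rw [Real.cos_pi_div_eight, Real.sin_pi_div_four]
  have h2 : Real.sqrt 2 ^ 2 = 2 := Real.sq_sqrt (by norm_num)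
  have h22 : Real.sqrt (2 + Real.sqrt 2) ^ 2 = 2 + Real.sqrt 2 :=
    Real.sq_sqrt (by positivity)
  have hp : (0:ℝ) < Real.sqrt 2 := Real.sqrt_pos.mpr (by norm_num)
  have hp2 : (0:ℝ) < Real.sqrt (2 + Real.sqrt 2) := Real.sqrt_pos.mpr (by positivity)
  nlinarith [sq_nonneg (Real.sqrt (2 + Real.sqrt 2) * Real.sqrt 2 - 2)]

lemma lorenz96_ineq_part (x : ℝ) (hx0 : 0 < x) (hx : x ≤ π/8) :
    Real.sin (3*x) - 2 * Real.cos x * Real.sin (π/3 - 2*x/3) < 0 := by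
  have hpi : (0:ℝ) < π := Real.pi_pos
  have hcos : Real.cos (π/8) ≤ Real.cos x :=
    Real.cos_le_cos_of_nonneg_of_le_pi hx0.le (by linarith) hx
  have hcos8 : (0:ℝ) < Real.cos (π/8) :=
    Real.cos_pos_of_mem_Ioo ⟨by linarith, by linarith⟩
  have hsin4 : (0:ℝ) < Real.sin (π/4) :=
    Real.sin_pos_of_pos_of_lt_pi (by linarith) (by linarith)
  have hsin : Real.sin (π/4) ≤ Real.sin (π/3 - 2*x/3) := by
    have := Real.strictMonoOn_sin.monotoneOn
      (a := π/4) (b := π/3 - 2*x/3)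
      ⟨by linarith, by linarith⟩ ⟨by linarith, by linarith⟩ (by linarith)
    simpa using this
  have h1 : 2 * Real.cos (π/8) * Real.sin (π/4)
      ≤ 2 * Real.cos x * Real.sin (π/3 - 2*x/3) := by
    apply mul_le_mul (by nlinarith) hsin hsin4.le (by nlinarith [hcos8.le.trans hcos])
  have h2 := lorenz96_sqrt2_cos_pi_div_eight_gt_one
  have h3 : Real.sin (3*x) ≤ 1 := Real.sin_le_one _
  linarith

lemma lorenz96_key_s14 (y : ℝ) :
    cos (6*y) - cos (12*y) - cos (2*π/3 - 4*y) + cos (4*π/3 - 8*y)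
      = 2 * sin (3*y) * (sin (9*y) - 2 * cos (3*y) * sin (π/3 - 2*y)) := by
  have h1 : (2:ℝ)*π/3 - 4*y = π - (π/3 + 4*y) := by ring
  have h2 : (4:ℝ)*π/3 - 8*y = π + (π/3 - 8*y) := by ring
  have e12 : (12:ℝ)*y = 6*y + 6*y := by ring
  have e9 : (9:ℝ)*y = 3*y + 6*y := by ring
  have e8 : (8:ℝ)*y = 4*y + 4*y := by ring
  have e6 : (6:ℝ)*y = 3*y + 3*y := by ring
  have e4 : (4:ℝ)*y = 2*y + 2*y := by ring
  have e3 : (3:ℝ)*y = y + 2*y := by ring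
  have e2 : (2:ℝ)*y = y + y := by ring
  rw [h1, h2]
  simp only [e12, e9, e8, e6, e4, e3, e2, Real.cos_add, Real.sin_add,
    Real.cos_sub, Real.sin_sub, Real.cos_pi, Real.sin_pi,
    Real.cos_pi_div_three, Real.sin_pi_div_three]
  linear_combination ((-1/2:ℝ) * Real.sin y^4 + (1/2:ℝ) * Real.sin y^6 + Real.sin y^8 + Real.sin y^10 + (-2:ℝ) * Real.cos y^1 * Real.sin y^3 * Real.sqrt 3^1 + (-2:ℝ) * Real.cos y^1 * Real.sin y^5 * Real.sqrt 3^1 + (3:ℝ) * Real.cos y^2 * Real.sin y^2 + (-25/2:ℝ) * Real.cos y^2 * Real.sin y^4 + (-14:ℝ) * Real.cos y^2 * Real.sin y^6 + (-13:ℝ) * Real.cos y^2 * Real.sin y^8 + (2:ℝ) * Real.cos y^3 * Real.sin y^1 * Real.sqrt 3^1 + (-1/2:ℝ) * Real.cos y^4 + (35/2:ℝ) * Real.cos y^4 * Real.sin y^2 + (-14:ℝ) * Real.cos y^4 * Real.sin y^6 + (2:ℝ) * Real.cos y^5 * Real.sin y^1 * Real.sqrt 3^1 + (-3/2:ℝ)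 * Real.cos y^6 + (14:ℝ) * Real.cos y^6 * Real.sin y^2 + (14:ℝ) * Real.cos y^6 * Real.sin y^4 + (-1:ℝ) * Real.cos y^8 + (13:ℝ) * Real.cos y^8 * Real.sin y^2 + (-1:ℝ) * Real.cos y^10) * (Real.sin_sq_add_cos_sq y)

/-- For `n ≥ 8` with `n ≡ 2 (mod 3)` and `l' = (n-2)/3`:
`f(1,n) - f(l',n) = 2 sin(π/n)·(sin(3π/n) - 2 cos(π/n) sin((π/3)(1 - 2/n)))`,
which is strictly negative for all such `n ≥ 8`. -/
theorem lorenz96_f_difference_mod_two (n : ℕ) (hn : 8 ≤ n) (hmod : n % 3 = 2) :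
    lorenz96f 1 n - lorenz96f ((n - 2) / 3) n
      = 2 * Real.sin (Real.pi / n) * (Real.sin (3 * Real.pi / n)
          - 2 * Real.cos (Real.pi / n) * Real.sin (Real.pi / 3 * (1 - 2 / n))) ∧
    lorenz96f 1 n - lorenz96f ((n - 2) / 3) n < 0 := by
  have hpi : (0:ℝ) < π := Real.pi_pos
  have hn0 : ((n:ℝ)) ≠ 0 := Nat.cast_ne_zero.mpr (by omega)
  have hnR : (8:ℝ) ≤ (n:ℝ) := by exact_mod_cast hn
  set k := n / 3 with hk
  have hl : (n - 2) / 3 = k := by omega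
  have hkcast : (k : ℝ) = ((n:ℝ) - 2)/3 := by
    have hnk : (n : ℝ) = 3*(k:ℝ) + 2 := by
      have : n = 3*k + 2 := by omega
      exact_mod_cast congrArg (Nat.cast : ℕ → ℝ) this
    linarith
  set y := π / (3 * (n:ℝ)) with hy
  have a1 : 2*π*((1:ℕ):ℝ)/(n:ℝ) = 6*y := by
    rw [hy]; push_cast; field_simp; ring
  have a2 : 4*π*((1:ℕ):ℝ)/(n:ℝ) = 12*y := by
    rw [hy]; push_cast; field_simp; ring
  have a3 : 2*π*(k:ℝ)/(n:ℝ) = 2*π/3 - 4*y := by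
    rw [hy, hkcast]; field_simp; ring
  have a4 : 4*π*(k:ℝ)/(n:ℝ) = 4*π/3 - 8*y := by
    rw [hy, hkcast]; field_simp; ring
  have a5 : π/(n:ℝ) = 3*y := by
    rw [hy]; field_simp
  have a6 : 3*π/(n:ℝ) = 9*y := by
    rw [hy]; field_simp; ring
  have a7 : π/3 * (1 - 2/(n:ℝ)) = π/3 - 2*y := by
    rw [hy]; field_simp
  have hid : lorenz96f 1 n - lorenz96f ((n - 2) / 3) n
      = 2 * Real.sin (Real.pi / n) * (Real.sin (3 * Real.pi / n)
          - 2 * Real.cos (Real.pi / n) * Real.sin (Real.pi / 3 * (1 - 2 / n))) := by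
    simp only [lorenz96f, hl]
    rw [a1, a2, a3, a4, a5, a6, a7]
    have := lorenz96_key_s14 y
    linarith
  refine ⟨hid, ?_⟩
  rw [hid]
  have hx0 : 0 < π/(n:ℝ) := by positivity
  have hx8 : π/(n:ℝ) ≤ π/8 := by
    apply div_le_div_of_nonneg_left hpi.le (by norm_num) hnR
  have hsinpos : 0 < Real.sin (π/(n:ℝ)) :=
    Real.sin_pos_of_pos_of_lt_pi hx0 (by
      calc π/(n:ℝ) ≤ π/8 := hx8
        _ < π := by linarith)
  have hkey := lorenz96_ineq_part (π/(n:ℝ)) hx0 hx8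
  have e1 : 3 * π / (n:ℝ) = 3*(π/(n:ℝ)) := by ring
  have e2 : π/3 * (1 - 2/(n:ℝ)) = π/3 - 2*(π/(n:ℝ))/3 := by ring
  rw [e1, e2]
  exact mul_neg_of_pos_of_neg (by positivity) hkey
end

section
/- Let l_1(n) denote an integer l maximizing f(l,n) = cos(2πl/n) - cos(4πl/n) over integers 0 < l < n/3. For all n ≥ 4 with n ≠ 7, the interval [n/6, n/4] contains an integer, and every maximizer l_1(n) lies in [n/6, n/4]. -/
open Real

lemma lorenz96_key_ge (y : ℝ) (h0 : 0 ≤ Real.cos y) (h1 : Real.cos y ≤ 1/2) :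
    1 ≤ Real.cos y - Real.cos (2*y) := by
  have h := Real.cos_two_mul y
  nlinarith

lemma lorenz96_key_lt (y : ℝ) (h : Real.cos y < 0 ∨ 1/2 < Real.cos y) :
    Real.cos y - Real.cos (2*y) < 1 := by
  have h2 := Real.cos_two_mul y
  have hle := Real.cos_le_one y
  rcases h with h | h
  · nlinarith
  · nlinarith

/-- For all `n ≥ 4` with `n ≠ 7`, the interval `[n/6, n/4]` contains an integer,
and every integer `l` maximizing `f(l,n)` over integers `0 < l < n/3` lies in
`[n/6, n/4]`. -/
theorem lorenz96_maximizer_location (n : ℕ) (hn : 4 ≤ n) (hn7 : n ≠ 7) :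
    (∃ l : ℕ, (n : ℝ) / 6 ≤ l ∧ (l : ℝ) ≤ n / 4) ∧
    (∀ l : ℕ, 0 < l → (l : ℝ) < n / 3 →
      (∀ l' : ℕ, 0 < l' → (l' : ℝ) < n / 3 → lorenz96f l' n ≤ lorenz96f l n) →
      (n : ℝ) / 6 ≤ l ∧ (l : ℝ) ≤ n / 4) := by
  have pi_pos := Real.pi_pos
  set l0 : ℕ := (n + 5) / 6 with hl0def
  have h6 : n ≤ 6 * l0 := by omega
  have h4 : 4 * l0 ≤ n := by omega
  have hl0pos : 0 < l0 := by omega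
  have npos : (0:ℝ) < n := by positivity
  have h6r : (n:ℝ) ≤ 6 * l0 := by exact_mod_cast h6
  have h4r : 4 * (l0:ℝ) ≤ n := by exact_mod_cast h4
  have hl0r1 : (n:ℝ)/6 ≤ l0 := by linarith
  have hl0r2 : (l0:ℝ) ≤ n/4 := by linarith
  refine ⟨⟨l0, hl0r1, hl0r2⟩, ?_⟩
  intro l hl hln hmax
  -- value at l0 is ≥ 1
  have hy0lb : π/3 ≤ 2*π*l0/n := by
    rw [le_div_iff₀ npos]; nlinarith
  have hy0ub : 2*π*l0/n ≤ π/2 := by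
    rw [div_le_iff₀ npos]; nlinarith
  have hc0 : 0 ≤ Real.cos (2*π*l0/n) :=
    Real.cos_nonneg_of_mem_Icc ⟨by linarith, hy0ub⟩
  have hc1 : Real.cos (2*π*l0/n) ≤ 1/2 := by
    have := Real.cos_le_cos_of_nonneg_of_le_pi (x := π/3) (y := 2*π*l0/n)
      (by positivity) (by linarith) hy0lb
    rwa [Real.cos_pi_div_three] at this
  have hfl0 : 1 ≤ lorenz96f l0 n := by
    have hkey := lorenz96_key_ge (2*π*l0/n) hc0 hc1
    have heq : (4:ℝ)*π*l0/n = 2*(2*π*l0/n) := by ring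
    rw [lorenz96f, heq]; exact hkey
  have hl0lt : (l0:ℝ) < n/3 := by linarith
  have hmaxl0 := hmax l0 hl0pos hl0lt
  have hfl : 1 ≤ lorenz96f l n := le_trans hfl0 hmaxl0
  by_contra hcon
  rw [not_and_or] at hcon
  have hlpos : (0:ℝ) < l := by exact_mod_cast hl
  have hylt : lorenz96f l n < 1 := by
    have heq : (4:ℝ)*π*l/n = 2*(2*π*l/n) := by ring
    rw [lorenz96f, heq]
    apply lorenz96_key_lt
    rcases hcon with h | h
    · push_neg at h
      right
      have hy2 : 2*π*l/n < π/3 := by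
        rw [div_lt_iff₀ npos]; nlinarith
      have := Real.cos_lt_cos_of_nonneg_of_le_pi (x := 2*π*l/n) (y := π/3)
        (by positivity) (by linarith) hy2
      rwa [Real.cos_pi_div_three] at this
    · push_neg at h
      left
      have hy1 : π/2 < 2*π*l/n := by
        rw [lt_div_iff₀ npos]; nlinarith
      have hy2 : 2*π*l/n < 2*π/3 := by
        rw [div_lt_iff₀ npos]; nlinarith
      exact Real.cos_neg_of_pi_div_two_lt_of_lt hy1 (by linarith)
  linarith
end

section
/- Let l_1(n) ∈ [n/6, n/4] maximize f(l,n) over integers 0 < l < n/3. Then 2πl_1(n)/n → arccos(1/4) as n → ∞; consequently 2π tan(π l_1(n)/n) → 2π tan(arccos(1/4)/2) and n/l_1(n) → 2π/arccos(1/4) as n → ∞. -/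
open Real Filter Topology

lemma cos_sub_cos_two_mul_eq (y : ℝ) :
    cos y - cos (2 * y) = 9 / 8 - 2 * (cos y - 1 / 4) ^ 2 := by
  rw [cos_two_mul]; ring

lemma lorenz96f_eq (l n : ℕ) :
    lorenz96f l n = 9 / 8 - 2 * (cos (2 * π * l / n) - 1 / 4) ^ 2 := by
  rw [← cos_sub_cos_two_mul_eq, lorenz96f]
  ring_nf

lemma lorenz96f_le (l n : ℕ) : lorenz96f l n ≤ 9 / 8 := by
  rw [lorenz96f_eq]
  nlinarith [sq_nonneg (cos (2 * π * l / n) - 1 / 4)]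

lemma tendsto_natFloor_mul_natCast_div {R : Type*} [TopologicalSpace R] [Field R] [LinearOrder R]
    [IsStrictOrderedRing R] [OrderTopology R] [FloorRing R] {a : R} (ha : 0 ≤ a) :
    Tendsto (fun n : ℕ ↦ (⌊a * n⌋₊ : R) / n) atTop (𝓝 a) :=
  (tendsto_nat_floor_mul_div_atTop ha).comp tendsto_natCast_atTop_atTop

lemma eventually_natFloor_mul_pos_and_lt {a b : ℝ} (ha : 0 < a) (hab : a < b) :
    ∀ᶠ n : ℕ in atTop, 0 < ⌊a * n⌋₊ ∧ (⌊a * n⌋₊ : ℝ) < b * n := by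
  filter_upwards [tendsto_natCast_atTop_atTop.eventually_ge_atTop a⁻¹,
    eventually_gt_atTop 0] with n hn hn0
  have hn0' : (0 : ℝ) < n := by exact_mod_cast hn0
  refine ⟨Nat.floor_pos.2 ?_, ?_⟩
  · calc (1 : ℝ) = a * a⁻¹ := (mul_inv_cancel₀ ha.ne').symm
      _ ≤ a * n := by gcongr
  · calc (⌊a * n⌋₊ : ℝ) ≤ a * n := Nat.floor_le (by positivity)
      _ < b * n := by gcongr

lemma tendsto_of_tendsto_sub_sq {α : Type*} {l : Filter α} {u : α → ℝ} {a : ℝ}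
    (h : Tendsto (fun x ↦ (u x - a) ^ 2) l (𝓝 0)) : Tendsto u l (𝓝 a) := by
  rw [tendsto_iff_norm_sub_tendsto_zero]
  simpa [Function.comp_def, sqrt_sq_eq_abs] using (continuous_sqrt.tendsto 0).comp h

lemma tendsto_arccos_of_tendsto_cos {α : Type*} {l : Filter α} {y : α → ℝ} {c : ℝ}
    (hy : ∀ᶠ x in l, y x ∈ Set.Icc 0 π) (h : Tendsto (fun x ↦ cos (y x)) l (𝓝 c)) :
    Tendsto y l (𝓝 (arccos c)) :=
  ((continuous_arccos.tendsto c).comp h).congr' (hy.mono fun _ hx ↦ arccos_cos hx.1 hx.2)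

lemma tendsto_lorenz96f_natFloor :
    Tendsto (fun n : ℕ ↦ lorenz96f ⌊arccos (1 / 4) / (2 * π) * n⌋₊ n) atTop (𝓝 (9 / 8)) := by
  have hlim : Tendsto (fun n : ℕ ↦ 2 * π * (⌊arccos (1 / 4) / (2 * π) * n⌋₊ : ℝ) / n) atTop
      (𝓝 (arccos (1 / 4))) := by
    have h := (tendsto_natFloor_mul_natCast_div
      (div_nonneg (arccos_nonneg (1 / 4)) two_pi_pos.le)).const_mul (2 * π)
    rw [mul_div_cancel₀ _ two_pi_pos.ne'] at h
    simpa only [mul_div_assoc] using h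
  have hcont := ((continuous_cos.tendsto _).comp hlim).sub_const (1 / 4) |>.pow 2
    |>.const_mul 2 |>.const_sub (9 / 8)
  rw [cos_arccos (by norm_num) (by norm_num)] at hcont
  simpa [lorenz96f_eq] using hcont

lemma tendsto_cos_of_lorenz96f_isMax (l₁ : ℕ → ℕ)
    (hmax : ∀ᶠ n : ℕ in atTop, ∀ l : ℕ, 0 < l → (l : ℝ) < n / 3 →
      lorenz96f l n ≤ lorenz96f (l₁ n) n) :
    Tendsto (fun n : ℕ ↦ cos (2 * π * l₁ n / n)) atTop (𝓝 (1 / 4)) := by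
  set t := arccos (1 / 4) / (2 * π)
  have ht : 0 < t := div_pos (arccos_pos.2 (by norm_num)) (by positivity)
  have ht3 : t < 1 / 3 := by
    rw [div_lt_iff₀ (by positivity)]
    nlinarith [arccos_lt_pi_div_two.2 (by norm_num : (0 : ℝ) < 1 / 4), pi_pos]
  have hf : Tendsto (fun n : ℕ ↦ lorenz96f (l₁ n) n) atTop (𝓝 (9 / 8)) := by
    refine tendsto_of_tendsto_of_tendsto_of_le_of_le' tendsto_lorenz96f_natFloor
      tendsto_const_nhds ?_ (Eventually.of_forall fun n ↦ lorenz96f_le _ _)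
    filter_upwards [hmax, eventually_natFloor_mul_pos_and_lt ht ht3] with n hn ⟨hpos, hlt⟩
    exact hn _ hpos (by linarith)
  refine tendsto_of_tendsto_sub_sq ?_
  have h := (hf.const_sub (9 / 8)).div_const 2
  rw [sub_self, zero_div] at h
  refine h.congr fun n ↦ ?_
  rw [lorenz96f_eq]
  ring

/-- If `l₁(n) ∈ [n/6, n/4]` maximizes `f(l,n)` over integers `0 < l < n/3`, then
`2πl₁(n)/n → arccos(1/4)` as `n → ∞`; consequently
`2π tan(π l₁(n)/n) → 2π tan(arccos(1/4)/2)` and `n/l₁(n) → 2π/arccos(1/4)`. -/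
theorem lorenz96_asymptotic_wave_number (l₁ : ℕ → ℕ)
    (hloc : ∀ n : ℕ, 4 ≤ n → n ≠ 7 →
      (n : ℝ) / 6 ≤ l₁ n ∧ (l₁ n : ℝ) ≤ (n : ℝ) / 4 ∧
      (∀ l : ℕ, 0 < l → (l : ℝ) < (n : ℝ) / 3 → lorenz96f l n ≤ lorenz96f (l₁ n) n)) :
    Tendsto (fun n : ℕ => 2 * Real.pi * (l₁ n : ℝ) / n) atTop (𝓝 (Real.arccos (1 / 4))) ∧
    Tendsto (fun n : ℕ => 2 * Real.pi * Real.tan (Real.pi * (l₁ n : ℝ) / n)) atTop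
      (𝓝 (2 * Real.pi * Real.tan (Real.arccos (1 / 4) / 2))) ∧
    Tendsto (fun n : ℕ => (n : ℝ) / (l₁ n : ℝ)) atTop
      (𝓝 (2 * Real.pi / Real.arccos (1 / 4))) := by
  have hl₁ : ∀ᶠ n : ℕ in atTop, (n : ℝ) / 6 ≤ l₁ n ∧ (l₁ n : ℝ) ≤ (n : ℝ) / 4 ∧
      (∀ l : ℕ, 0 < l → (l : ℝ) < (n : ℝ) / 3 → lorenz96f l n ≤ lorenz96f (l₁ n) n) :=
    (eventually_ge_atTop 8).mono fun n hn ↦ hloc n (by omega) (by omega)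
  have hA : 0 < arccos (1 / 4) := arccos_pos.2 (by norm_num)
  have hA2 : arccos (1 / 4) < π / 2 := arccos_lt_pi_div_two.2 (by norm_num)
  have hy : Tendsto (fun n : ℕ ↦ 2 * π * (l₁ n : ℝ) / n) atTop (𝓝 (arccos (1 / 4))) := by
    refine tendsto_arccos_of_tendsto_cos ?_
      (tendsto_cos_of_lorenz96f_isMax l₁ (hl₁.mono fun _ h ↦ h.2.2))
    filter_upwards [hl₁, eventually_gt_atTop 0] with n ⟨_, hle, _⟩ hn
    refine ⟨by positivity, ?_⟩
    rw [div_le_iff₀ (by exact_mod_cast hn)]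
    nlinarith [pi_pos]
  refine ⟨hy, ?_, ?_⟩
  · have hcos : cos (arccos (1 / 4) / 2) ≠ 0 :=
      (cos_pos_of_mem_Ioo ⟨by linarith, by linarith⟩).ne'
    refine (((continuousAt_tan.2 hcos).tendsto.comp (hy.div_const 2)).const_mul (2 * π)).congr
      fun n ↦ ?_
    simp only [Function.comp_apply]
    ring_nf
  · refine (tendsto_const_nhds.div hy hA.ne').congr' ?_
    filter_upwards [hl₁, eventually_gt_atTop 0] with n ⟨hge, _, _⟩ hn
    have hn' : (0 : ℝ) < n := by exact_mod_cast hn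
    have hl : (0 : ℝ) < l₁ n := by linarith [div_pos hn' (by norm_num : (0 : ℝ) < 6)]
    simp only [Pi.div_apply]
    field_simp
end
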